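/- With $P_j$ the hat-function projection on $[0,M]^d$, for every Lipschitz function $f$ the Lipschitz constant of $P_j f$ satisfies $\|P_j f\|_{Lip} \le 2^{d+1} d \|f\|_{Lip}$, with Lipschitz constants taken with respect to the $\ell^1$ norm. -/

import Mathlib

/-!
Writing the hat function as a difference of ramps `hat t = ramp (t + 1) - ramp t`, Abel summation
expresses the one-dimensional interpolant `∑ m, g m * hat (u - m)` on `[0, N]` as
`g 0 + ∑ m, (g (m + 1) - g m) * ramp (u - m)`. Since `∑ m, |ramp (u - m) - ramp (v - m)| = |u - v|`,
the interpolant of a sequence with increments at most `L` is `L`-Lipschitz. In dimension `d`,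
moving a single coordinate of `x` changes `P_j f (x)` by a convex combination (weights: the hat
functions of the other coordinates) of such one-dimensional changes, each at most
`K * |Δx_i|`; changing the coordinates one at a time gives `‖P_j f‖_Lip ≤ ‖f‖_Lip`, far below
`2^(d+1) d ‖f‖_Lip`.
-/

open Finset

noncomputable def hat (t : ℝ) : ℝ := max (1 - |t|) 0

/-- The clamp `min (max t 0) 1`, written as a difference of two ReLUs so that its integer
translates telescope. -/
noncomputable def ramp (t : ℝ) : ℝ := max t 0 - max (t - 1) 0

lemma hat_nonneg (t : ℝ) : 0 ≤ hat t := le_max_right _ _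

lemma hat_eq_ramp_sub_ramp (t : ℝ) : hat t = ramp (t + 1) - ramp t := by
  simp only [hat, ramp, max_def, abs_eq_max_neg]
  split_ifs <;> linarith

lemma ramp_eq_zero_of_nonpos {t : ℝ} (ht : t ≤ 0) : ramp t = 0 := by
  simp only [ramp, max_def]; split_ifs <;> linarith

lemma ramp_eq_one_of_one_le {t : ℝ} (ht : 1 ≤ t) : ramp t = 1 := by
  simp only [ramp, max_def]; split_ifs <;> linarith

lemma ramp_mono : Monotone ramp := by
  intro s t hst
  simp only [ramp, max_def]; split_ifs <;> linarith

lemma sum_ramp_sub_natCast {N : ℕ} {u : ℝ} (h0 : 0 ≤ u) (hN : u ≤ N) :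
    ∑ m : Fin N, ramp (u - m) = u := by
  have hr (m : ℕ) : ramp (u - m) = max (u - m) 0 - max (u - ↑(m + 1)) 0 := by
    rw [ramp]; push_cast; ring_nf
  rw [Fin.sum_univ_eq_sum_range (fun m : ℕ => ramp (u - m)), sum_congr rfl fun m _ => hr m,
    sum_range_sub' (fun m : ℕ => max (u - m) 0), Nat.cast_zero, sub_zero, max_eq_left h0,
    max_eq_right (by linarith)]
  ring

lemma sum_mul_hat_sub_natCast {N : ℕ} (g : Fin (N + 1) → ℝ) {u : ℝ} (h0 : 0 ≤ u) (hN : u ≤ N) :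
    ∑ m, g m * hat (u - m) = g 0 + ∑ m : Fin N, (g m.succ - g m.castSucc) * ramp (u - m) := by
  have hshift (x : ℝ) : u - (x + 1) + 1 = u - x := by ring
  simp only [hat_eq_ramp_sub_ramp, mul_sub, sum_sub_distrib, sub_mul]
  rw [Fin.sum_univ_succ (fun m => g m * ramp (u - m + 1)),
    Fin.sum_univ_castSucc (fun m => g m * ramp (u - m))]
  simp only [Fin.val_zero, Fin.val_succ, Fin.val_castSucc, Fin.val_last, Nat.cast_zero,
    Nat.cast_succ, sub_zero, hshift]
  rw [ramp_eq_one_of_one_le (by linarith), ramp_eq_zero_of_nonpos (by linarith)]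
  ring

lemma sum_hat_sub_natCast {N : ℕ} {u : ℝ} (h0 : 0 ≤ u) (hN : u ≤ N) :
    ∑ m : Fin (N + 1), hat (u - m) = 1 := by
  simpa using sum_mul_hat_sub_natCast (fun _ => 1) h0 hN

lemma sum_abs_ramp_sub_ramp {N : ℕ} {u v : ℝ} (hu : 0 ≤ u) (huN : u ≤ N) (hv : 0 ≤ v)
    (hvN : v ≤ N) : ∑ m : Fin N, |ramp (u - m) - ramp (v - m)| = |u - v| := by
  wlog huv : u ≤ v generalizing u v
  · simpa only [abs_sub_comm] using this hv hvN hu huN (le_of_not_ge huv)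
  have hmono (m : Fin N) : ramp (u - m) ≤ ramp (v - m) := ramp_mono (by linarith)
  calc ∑ m : Fin N, |ramp (u - m) - ramp (v - m)| = ∑ m : Fin N, (ramp (v - m) - ramp (u - m)) :=
        sum_congr rfl fun m _ => by rw [abs_sub_comm, abs_of_nonneg (sub_nonneg.2 (hmono m))]
    _ = |u - v| := by
        rw [sum_sub_distrib, sum_ramp_sub_natCast hu huN, sum_ramp_sub_natCast hv hvN, abs_sub_comm,
          abs_of_nonneg (sub_nonneg.2 huv)]

lemma abs_sum_mul_hat_sub_le {N : ℕ} (g : Fin (N + 1) → ℝ) {L : ℝ}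
    (hg : ∀ m : Fin N, |g m.succ - g m.castSucc| ≤ L) {u v : ℝ}
    (hu : 0 ≤ u) (huN : u ≤ N) (hv : 0 ≤ v) (hvN : v ≤ N) :
    |∑ m, g m * hat (u - m) - ∑ m, g m * hat (v - m)| ≤ L * |u - v| := by
  rw [sum_mul_hat_sub_natCast g hu huN, sum_mul_hat_sub_natCast g hv hvN, add_sub_add_left_eq_sub,
    ← sum_sub_distrib]
  calc _ ≤ ∑ m : Fin N, L * |ramp (u - m) - ramp (v - m)| := by
        refine (abs_sum_le_sum_abs _ _).trans (sum_le_sum fun m _ => ?_)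
        rw [← mul_sub, abs_mul]
        exact mul_le_mul_of_nonneg_right (hg m) (abs_nonneg _)
    _ = L * |u - v| := by rw [← mul_sum, sum_abs_ramp_sub_ramp hu huN hv hvN]

section Lattice

variable {ι : Type*} [Fintype ι]

lemma nonneg_of_abs_sub_le_mul_sum [Nonempty ι] {f : (ι → ℝ) → ℝ} {K : ℝ}
    (hf : ∀ x y, |f x - f y| ≤ K * ∑ i, |x i - y i|) : 0 ≤ K := by
  have h := (abs_nonneg _).trans (hf 1 0)
  simp only [Pi.one_apply, Pi.zero_apply, sub_zero, abs_one, sum_const, card_univ, nsmul_eq_mul,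
    mul_one] at h
  exact nonneg_of_mul_nonneg_left h (by exact_mod_cast Fintype.card_pos)

def latticePoint {N : ℕ} (h : ℝ) (k : ι → Fin (N + 1)) : ι → ℝ := fun i => (k i : ℝ) * h

variable [DecidableEq ι]

lemma abs_sub_le_mul_sum_of_forall_eq_off {G : (ι → ℝ) → ℝ} {s : Set ℝ} {K : ℝ}
    (hG : ∀ x y, (∀ i, x i ∈ s) → (∀ i, y i ∈ s) → ∀ i₀, (∀ i ≠ i₀, x i = y i) →
      |G x - G y| ≤ K * |x i₀ - y i₀|)
    {x y : ι → ℝ} (hx : ∀ i, x i ∈ s) (hy : ∀ i, y i ∈ s) :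
    |G x - G y| ≤ K * ∑ i, |x i - y i| := by
  suffices key : ∀ T : Finset ι, ∀ y : ι → ℝ, (∀ i, y i ∈ s) → (∀ i ∉ T, x i = y i) →
      |G x - G y| ≤ K * ∑ i ∈ T, |x i - y i| from key univ y hy (by simp)
  intro T
  induction T using Finset.induction_on with
  | empty =>
    intro y _ hxy
    obtain rfl : x = y := funext fun i => hxy i (notMem_empty i)
    simp
  | insert a T haT ih =>
    intro y hy hxy
    set z := Function.update y a (x a)
    have hz : ∀ i, z i ∈ s := fun i => by
      rcases eq_or_ne i a with rfl | hia
      · simpa [z] using hx i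
      · simpa [z, hia] using hy i
    have hxz : ∀ i ∉ T, x i = z i := fun i hi => by
      rcases eq_or_ne i a with rfl | hia
      · simp [z]
      · simpa [z, hia] using hxy i (by simp [hia, hi])
    have hzy : ∀ i ≠ a, z i = y i := fun i hia => Function.update_of_ne hia _ _
    have hsum : ∑ i ∈ T, |x i - z i| = ∑ i ∈ T, |x i - y i| :=
      sum_congr rfl fun i hi => by rw [hzy i (ne_of_mem_of_not_mem hi haT)]
    calc |G x - G y| ≤ |G x - G z| + |G z - G y| := abs_sub_le _ _ _
      _ ≤ K * ∑ i ∈ T, |x i - y i| + K * |x a - y a| := by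
        gcongr
        · exact (ih z hz hxz).trans_eq (by rw [hsum])
        · simpa [z] using hG z y hz hy a hzy
      _ = K * ∑ i ∈ insert a T, |x i - y i| := by rw [sum_insert haT]; ring

lemma sum_mul_prod_eq_sum_funSplitAt {α : Type*} [Fintype α] (i₀ : ι)
    (F : (ι → α) → ℝ) (c : ι → α → ℝ) :
    ∑ k, F k * ∏ i, c i (k i) = ∑ k' : {i // i ≠ i₀} → α,
      (∏ i : {i // i ≠ i₀}, c i (k' i)) *
        ∑ m, F ((Equiv.funSplitAt i₀ α).symm (m, k')) * c i₀ m := by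
  rw [← (Equiv.funSplitAt i₀ α).symm.sum_comp, Fintype.sum_prod_type, sum_comm]
  refine sum_congr rfl fun k' _ => ?_
  rw [mul_sum]
  refine sum_congr rfl fun m _ => ?_
  rw [Fintype.prod_eq_mul_prod_subtype_ne _ i₀]
  have hrest : ∏ i : {i // i ≠ i₀}, c i ((Equiv.funSplitAt i₀ α).symm (m, k') i) =
      ∏ i : {i // i ≠ i₀}, c i (k' i) :=
    prod_congr rfl fun i _ => by rw [Equiv.funSplitAt_symm_apply, dif_neg i.prop]
  rw [hrest, Equiv.funSplitAt_symm_apply, dif_pos rfl]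
  ring

noncomputable def hatInterp (N : ℕ) (h : ℝ) (f : (ι → ℝ) → ℝ) (x : ι → ℝ) : ℝ :=
  ∑ k : ι → Fin (N + 1), f (latticePoint h k) * ∏ i, hat (h⁻¹ * (x i - k i * h))

lemma hatInterp_eq_sum_funSplitAt {N : ℕ} {h : ℝ} (hh : h ≠ 0)
    (f : (ι → ℝ) → ℝ) (x : ι → ℝ) (i₀ : ι) :
    hatInterp N h f x = ∑ k' : {i // i ≠ i₀} → Fin (N + 1),
      (∏ i : {i // i ≠ i₀}, hat (h⁻¹ * x i - k' i)) *
        ∑ m, f (latticePoint h ((Equiv.funSplitAt i₀ _).symm (m, k'))) * hat (h⁻¹ * x i₀ - m) := by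
  have hscale (t : ℝ) (m : ℕ) : h⁻¹ * (t - m * h) = h⁻¹ * t - m := by field_simp
  simp only [hatInterp, hscale]
  exact sum_mul_prod_eq_sum_funSplitAt i₀ (fun k => f (latticePoint h k))
    (fun i m => hat (h⁻¹ * x i - m))

lemma abs_sub_latticePoint_funSplitAt_succ_le {N : ℕ} {h : ℝ} (hh : 0 < h) {f : (ι → ℝ) → ℝ}
    {K : ℝ} (hf : ∀ x y, |f x - f y| ≤ K * ∑ i, |x i - y i|) (i₀ : ι)
    (k' : {i // i ≠ i₀} → Fin (N + 1)) (m : Fin N) :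
    |f (latticePoint h ((Equiv.funSplitAt i₀ _).symm (m.succ, k')))
      - f (latticePoint h ((Equiv.funSplitAt i₀ _).symm (m.castSucc, k')))| ≤ K * h := by
  refine (hf _ _).trans_eq ?_
  rw [Fintype.sum_eq_single i₀]
  · simp only [latticePoint, Equiv.funSplitAt_symm_apply, dif_pos, Fin.val_succ, Fin.val_castSucc]
    push_cast
    rw [← sub_mul, add_sub_cancel_left, one_mul, abs_of_pos hh]
  · intro i hi
    simp only [latticePoint, Equiv.funSplitAt_symm_apply, dif_neg hi, sub_self, abs_zero]

lemma abs_hatInterp_sub_le_of_eq_off {N : ℕ} {h : ℝ} (hh : 0 < h) {f : (ι → ℝ) → ℝ}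
    {K : ℝ} (hf : ∀ x y, |f x - f y| ≤ K * ∑ i, |x i - y i|) {x y : ι → ℝ}
    (hx : ∀ i, x i ∈ Set.Icc 0 (N * h)) (hy : ∀ i, y i ∈ Set.Icc 0 (N * h)) {i₀ : ι}
    (hxy : ∀ i ≠ i₀, x i = y i) :
    |hatInterp N h f x - hatInterp N h f y| ≤ K * |x i₀ - y i₀| := by
  set P : ({i // i ≠ i₀} → Fin (N + 1)) → ℝ := fun k' => ∏ i : {i // i ≠ i₀}, hat (h⁻¹ * x i - k' i)
  set I : ({i // i ≠ i₀} → Fin (N + 1)) → ℝ → ℝ :=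
    fun k' u => ∑ m, f (latticePoint h ((Equiv.funSplitAt i₀ _).symm (m, k'))) * hat (u - m)
  have hscaled (z : ι → ℝ) (hz : ∀ i, z i ∈ Set.Icc 0 (N * h)) (i : ι) :
      0 ≤ h⁻¹ * z i ∧ h⁻¹ * z i ≤ N :=
    ⟨mul_nonneg (inv_nonneg.2 hh.le) (hz i).1,
      by rw [inv_mul_le_iff₀ hh, mul_comm]; exact (hz i).2⟩
  have hdiff : hatInterp N h f x - hatInterp N h f y =
      ∑ k', P k' * (I k' (h⁻¹ * x i₀) - I k' (h⁻¹ * y i₀)) := by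
    rw [hatInterp_eq_sum_funSplitAt hh.ne' f x i₀, hatInterp_eq_sum_funSplitAt hh.ne' f y i₀,
      ← sum_sub_distrib]
    refine sum_congr rfl fun k' _ => ?_
    simp only [P, I, mul_sub, fun i : {i // i ≠ i₀} => hxy i i.prop]
  have hP_nonneg (k') : 0 ≤ P k' := prod_nonneg fun _ _ => hat_nonneg _
  have hP_sum : ∑ k', P k' = 1 := by
    simp only [P]
    rw [← Fintype.prod_sum fun (i : {i // i ≠ i₀}) (m : Fin (N + 1)) => hat (h⁻¹ * x i - m)]
    exact prod_eq_one fun i _ => sum_hat_sub_natCast (hscaled x hx i).1 (hscaled x hx i).2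
  have hI (k') : |I k' (h⁻¹ * x i₀) - I k' (h⁻¹ * y i₀)| ≤ K * h * |h⁻¹ * x i₀ - h⁻¹ * y i₀| :=
    abs_sum_mul_hat_sub_le _ (abs_sub_latticePoint_funSplitAt_succ_le hh hf i₀ k')
      (hscaled x hx i₀).1 (hscaled x hx i₀).2 (hscaled y hy i₀).1 (hscaled y hy i₀).2
  rw [hdiff]
  calc |∑ k', P k' * (I k' (h⁻¹ * x i₀) - I k' (h⁻¹ * y i₀))|
      ≤ ∑ k', P k' * (K * h * |h⁻¹ * x i₀ - h⁻¹ * y i₀|) := by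
        refine (abs_sum_le_sum_abs _ _).trans (sum_le_sum fun k' _ => ?_)
        rw [abs_mul, abs_of_nonneg (hP_nonneg k')]
        exact mul_le_mul_of_nonneg_left (hI k') (hP_nonneg k')
    _ = K * |x i₀ - y i₀| := by
        rw [← sum_mul, hP_sum, one_mul, ← mul_sub, abs_mul, abs_inv, abs_of_pos hh, mul_assoc,
          mul_inv_cancel_left₀ hh.ne']

theorem abs_hatInterp_sub_le {N : ℕ} {h : ℝ} (hh : 0 < h) {f : (ι → ℝ) → ℝ} {K : ℝ}
    (hf : ∀ x y, |f x - f y| ≤ K * ∑ i, |x i - y i|) {x y : ι → ℝ}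
    (hx : ∀ i, x i ∈ Set.Icc 0 (N * h)) (hy : ∀ i, y i ∈ Set.Icc 0 (N * h)) :
    |hatInterp N h f x - hatInterp N h f y| ≤ K * ∑ i, |x i - y i| :=
  abs_sub_le_mul_sum_of_forall_eq_off
    (fun _ _ hx hy _ hxy => abs_hatInterp_sub_le_of_eq_off hh hf hx hy hxy) hx hy

end Lattice

theorem stmt11_general
    (d j : ℕ) (hj : 0 < j) (M : ℝ) (hM : 0 < M)
    (χ : ℝ → ℝ) (hχ : ∀ t, χ t = max (1 - |t|) 0)
    (φ : (Fin d → Fin (j + 1)) → (Fin d → ℝ) → ℝ)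
    (hφ : ∀ k x, φ k x = ∏ i, χ ((j / M) * (x i - (k i : ℝ) * (M / j))))
    (f : (Fin d → ℝ) → ℝ) (K : ℝ)
    (hfLip : ∀ x y, |f x - f y| ≤ K * ∑ i, |x i - y i|)
    (x y : Fin d → ℝ) (hx : ∀ i, x i ∈ Set.Icc (0:ℝ) M) (hy : ∀ i, y i ∈ Set.Icc (0:ℝ) M) :
    |(∑ k : Fin d → Fin (j + 1), f (fun i => (k i : ℝ) * (M / j)) * φ k x)
        - ∑ k : Fin d → Fin (j + 1), f (fun i => (k i : ℝ) * (M / j)) * φ k y|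
      ≤ 2 ^ (d + 1) * d * K * ∑ i, |x i - y i| := by
  obtain rfl : χ = hat := funext hχ
  have hφ' (z : Fin d → ℝ) : ∑ k : Fin d → Fin (j + 1), f (fun i => (k i : ℝ) * (M / j)) * φ k z =
      hatInterp j (M / j) f z := by
    simp only [hatInterp, hφ, inv_div]
    rfl
  have hbox : (j : ℝ) * (M / j) = M := mul_div_cancel₀ M (by positivity)
  rw [← hbox] at hx hy
  rw [hφ', hφ']
  refine (abs_hatInterp_sub_le (by positivity) hfLip hx hy).trans ?_
  rw [mul_sum, mul_sum]
  refine sum_le_sum fun i _ => ?_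
  have : Nonempty (Fin d) := ⟨i⟩
  have hK := nonneg_of_abs_sub_le_mul_sum hfLip
  have hconst : (1 : ℝ) ≤ 2 ^ (d + 1) * d :=
    one_le_mul_of_one_le_of_one_le (one_le_pow₀ one_le_two) (by exact_mod_cast i.pos)
  rw [mul_assoc]
  exact le_mul_of_one_le_left (mul_nonneg hK (abs_nonneg _)) hconst

/-- Lipschitz bound for the hat-function projection:
`‖P_j f‖_{Lip} ≤ 2^{d+1} d ‖f‖_{Lip}`, with Lipschitz constants taken with respect to
the `ℓ¹` norm on `[0,M]^d`. -/
theorem stmt11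
    (d j : ℕ) (hd : 0 < d) (hj : 0 < j) (M : ℝ) (hM : 0 < M)
    (χ : ℝ → ℝ) (hχ : ∀ t, χ t = max (1 - |t|) 0)
    (φ : (Fin d → Fin (j + 1)) → (Fin d → ℝ) → ℝ)
    (hφ : ∀ k x, φ k x = ∏ i, χ ((j / M) * (x i - (k i : ℝ) * (M / j))))
    (f : (Fin d → ℝ) → ℝ) (K : ℝ)
    (hfLip : ∀ x y, |f x - f y| ≤ K * ∑ i, |x i - y i|)
    (x y : Fin d → ℝ) (hx : ∀ i, x i ∈ Set.Icc (0:ℝ) M) (hy : ∀ i, y i ∈ Set.Icc (0:ℝ) M) :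
    |(∑ k : Fin d → Fin (j + 1), f (fun i => (k i : ℝ) * (M / j)) * φ k x)
        - ∑ k : Fin d → Fin (j + 1), f (fun i => (k i : ℝ) * (M / j)) * φ k y|
      ≤ 2 ^ (d + 1) * d * K * ∑ i, |x i - y i| :=
  stmt11_general d j hj M hM χ hχ φ hφ f K hfLip x y hx hy
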